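/- arXiv:1212.0827 — 2 statements merged into one kernel-verified Lean document; each statement's English description precedes it below -/
import Mathlib

section
/- Let x₁, x₂ be two points strictly on opposite sides of a plane Π in ℝ^3 and let Y ⊆ Π. Then (x₁ ∗ Y) ∩ (x₂ ∗ Y) = Y. -/
/-- The cone with vertex `x` and base `Y`: the union of `Y` with all closed
line segments joining `x` to points of `Y`. -/
def cone {N : ℕ} (x : EuclideanSpace ℝ (Fin N)) (Y : Set (EuclideanSpace ℝ (Fin N))) :
    Set (EuclideanSpace ℝ (Fin N)) :=
  Y ∪ ⋃ y ∈ Y, segment ℝ x y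

/-- Let `Π = {p | f p = c}` be a plane in `ℝ³`, let `x₁, x₂` lie strictly on
opposite sides of `Π`, and let `Y ⊆ Π` be nonempty. Then the cones `x₁ ∗ Y` and
`x₂ ∗ Y` intersect exactly in `Y`. -/
theorem stmt_9 (f : EuclideanSpace ℝ (Fin 3) →ₗ[ℝ] ℝ) (c : ℝ)
    (Y : Set (EuclideanSpace ℝ (Fin 3))) (hY : Y.Nonempty) (hYPi : Y ⊆ {p | f p = c})
    (x₁ x₂ : EuclideanSpace ℝ (Fin 3)) (hx₁ : f x₁ < c) (hx₂ : c < f x₂) :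
    cone x₁ Y ∩ cone x₂ Y = Y := by
  ext p
  constructor
  · rintro ⟨h1, h2⟩
    rcases h1 with hp | hp
    · exact hp
    simp only [Set.mem_iUnion] at hp
    obtain ⟨y, hy, a, b, ha, hb, hab, hpy⟩ := hp
    have hfy : f y = c := hYPi hy
    have hfp1 : f p = a * f x₁ + b * c := by
      rw [← hpy]; simp [map_add, map_smul, hfy]
    rcases eq_or_lt_of_le ha with ha0 | ha0
    · have hb1 : b = 1 := by linarith
      have : p = y := by rw [← hpy, ← ha0, hb1]; simp
      rwa [this]
    · exfalso
      have hc : a * c + b * c = c := by rw [← add_mul, hab, one_mul]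
      have hlt : f p < c := by
        have := mul_lt_mul_of_pos_left hx₁ ha0
        linarith
      rcases h2 with hq | hq
      · have : f p = c := hYPi hq
        linarith
      simp only [Set.mem_iUnion] at hq
      obtain ⟨z, hz, a', b', ha', hb', hab', hpz⟩ := hq
      have hfz : f z = c := hYPi hz
      have hfp2 : f p = a' * f x₂ + b' * c := by
        rw [← hpz]; simp [map_add, map_smul, hfz]
      have hc' : a' * c + b' * c = c := by rw [← add_mul, hab', one_mul]
      have := mul_le_mul_of_nonneg_left hx₂.le ha'
      linarith
  · intro hp
    exact ⟨Or.inl hp, Or.inl hp⟩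
end

section
/- The weighted Laplacian linear system defining Tutte's barycentric embedding has a unique solution: if G is a finite connected graph with nonempty boundary set B, positive edge weights, and prescribed boundary positions, then there is exactly one assignment of positions to interior vertices satisfying the weighted barycentric equations. -/
open SimpleGraph

/-- The weighted Laplacian linear system defining Tutte's barycentric embedding
has a unique solution: if `G` is a finite connected graph with nonempty boundary
set `B`, positive edge weights `w`, and prescribed boundary positions `q`, then
there is exactly one assignment of positions satisfying the prescribed boundary
values together with the weighted barycentric equations at interior vertices. -/
theorem stmt_19 {V : Type} [Fintype V] [DecidableEq V]
    (G : SimpleGraph V) [DecidableRel G.Adj] (hG : G.Connected)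
    (B : Finset V) (hB : B.Nonempty)
    (q : V → EuclideanSpace ℝ (Fin 2))
    (w : V → V → ℝ) (hw : ∀ u v, G.Adj u v → 0 < w u v) :
    ∃! p : V → EuclideanSpace ℝ (Fin 2),
      (∀ b ∈ B, p b = q b) ∧
      ∀ v ∉ B,
        p v = (∑ u ∈ G.neighborFinset v, w v u)⁻¹ •
                ∑ u ∈ G.neighborFinset v, w v u • p u := by
  classical
  obtain ⟨b₀, hb₀⟩ := hB
  have hne : Nonempty V := ⟨b₀⟩
  set d : V → ℝ := fun v => ∑ u ∈ G.neighborFinset v, w v u with hd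
  -- every interior vertex has a neighbor
  have hdeg : ∀ v, v ∉ B → ∃ u, u ∈ G.neighborFinset v := by
    intro v hv
    have hvb : v ≠ b₀ := fun h => hv (h ▸ hb₀)
    obtain ⟨W⟩ := hG.preconnected v b₀
    cases W with
    | nil => exact absurd rfl hvb
    | cons h _ => exact ⟨_, (G.mem_neighborFinset _ _).mpr h⟩
  have hdpos : ∀ v, v ∉ B → 0 < d v := by
    intro v hv
    obtain ⟨u, hu⟩ := hdeg v hv
    exact Finset.sum_pos' (fun x hx => (hw v x ((G.mem_neighborFinset _ _).mp hx)).le)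
      ⟨u, hu, hw v u ((G.mem_neighborFinset _ _).mp hu)⟩
  -- the linear operator
  set L : (V → EuclideanSpace ℝ (Fin 2)) →ₗ[ℝ] (V → EuclideanSpace ℝ (Fin 2)) :=
    { toFun := fun p v => if v ∈ B then p v
        else p v - (d v)⁻¹ • ∑ u ∈ G.neighborFinset v, w v u • p u
      map_add' := by
        intro p r
        funext v
        by_cases h : v ∈ B <;>
          simp [h, Finset.sum_add_distrib, smul_add] <;> abel
      map_smul' := by
        intro c p
        funext v
        by_cases h : v ∈ B <;>
          simp [h, Finset.smul_sum, smul_sub, smul_comm c] } with hL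
  have hLapp : ∀ (p : V → EuclideanSpace ℝ (Fin 2)) (v : V), L p v = if v ∈ B then p v
      else p v - (d v)⁻¹ • ∑ u ∈ G.neighborFinset v, w v u • p u := fun p v => rfl
  -- characterization of the system
  set c : V → EuclideanSpace ℝ (Fin 2) := fun v => if v ∈ B then q v else 0 with hc
  have hchar : ∀ p : V → EuclideanSpace ℝ (Fin 2), L p = c ↔
      ((∀ b ∈ B, p b = q b) ∧
        ∀ v ∉ B, p v = (d v)⁻¹ • ∑ u ∈ G.neighborFinset v, w v u • p u) := by
    intro p
    rw [funext_iff]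
    constructor
    · intro h
      refine ⟨fun b hb => ?_, fun v hv => ?_⟩
      · have := h b; rw [hLapp] at this; simpa [hb, hc] using this
      · have := h v; rw [hLapp] at this
        simp only [hv, if_neg, hc, if_false] at this
        simpa [sub_eq_zero] using this
    · rintro ⟨h1, h2⟩ v
      rw [hLapp]
      by_cases hv : v ∈ B
      · simp [hv, hc, h1 v hv]
      · simp [hv, hc, sub_eq_zero, h2 v hv]
  -- injectivity via the maximum principle
  have hinj : Function.Injective L := by
    rw [injective_iff_map_eq_zero]
    intro p hp
    have h0 : ∀ b ∈ B, p b = 0 := by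
      intro b hb
      have := congrFun hp b
      rw [hLapp] at this; simpa [hb] using this
    have hharm : ∀ v ∉ B, p v = (d v)⁻¹ • ∑ u ∈ G.neighborFinset v, w v u • p u := by
      intro v hv
      have := congrFun hp v
      rw [hLapp] at this
      simp only [hv, if_neg, if_false] at this
      simpa [sub_eq_zero] using this
    set M : ℝ := Finset.univ.sup' Finset.univ_nonempty (fun v => ‖p v‖) with hM
    have hMle : ∀ u, ‖p u‖ ≤ M := fun u => by
      rw [hM]; exact Finset.le_sup' (fun v => ‖p v‖) (Finset.mem_univ u)
    by_cases hMpos : M ≤ 0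
    · funext v
      have h1 : ‖p v‖ ≤ 0 := (hMle v).trans hMpos
      have : ‖p v‖ = 0 := le_antisymm h1 (norm_nonneg _)
      simpa using this
    push_neg at hMpos
    exfalso
    -- key propagation step
    have hkey : ∀ v, v ∉ B → ‖p v‖ = M → ∀ u ∈ G.neighborFinset v, ‖p u‖ = M := by
      intro v hv hvM
      have hdv := hdpos v hv
      have hnorm : ‖p v‖ ≤ (d v)⁻¹ * ∑ u ∈ G.neighborFinset v, w v u * ‖p u‖ := by
        rw [hharm v hv, norm_smul, Real.norm_eq_abs, abs_of_pos (inv_pos.mpr hdv)]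
        gcongr
        calc ‖∑ u ∈ G.neighborFinset v, w v u • p u‖
            ≤ ∑ u ∈ G.neighborFinset v, ‖w v u • p u‖ := norm_sum_le _ _
          _ = ∑ u ∈ G.neighborFinset v, w v u * ‖p u‖ := by
              refine Finset.sum_congr rfl fun u hu => ?_
              rw [norm_smul, Real.norm_eq_abs,
                abs_of_pos (hw v u ((G.mem_neighborFinset _ _).mp hu))]
      have hge : d v * M ≤ ∑ u ∈ G.neighborFinset v, w v u * ‖p u‖ := by
        rw [← hvM]
        calc d v * ‖p v‖ ≤ d v * ((d v)⁻¹ * ∑ u ∈ G.neighborFinset v, w v u * ‖p u‖) := by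
              gcongr
          _ = ∑ u ∈ G.neighborFinset v, w v u * ‖p u‖ := by
              field_simp
      have hsum0 : ∑ u ∈ G.neighborFinset v, w v u * (M - ‖p u‖) = 0 := by
        have hexp : ∑ u ∈ G.neighborFinset v, w v u * (M - ‖p u‖)
            = d v * M - ∑ u ∈ G.neighborFinset v, w v u * ‖p u‖ := by
          rw [hd]
          rw [Finset.sum_mul, ← Finset.sum_sub_distrib]
          exact Finset.sum_congr rfl fun u hu => by ring
        have hle : ∑ u ∈ G.neighborFinset v, w v u * (M - ‖p u‖) ≤ 0 := by
          rw [hexp]; linarith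
        have hge' : 0 ≤ ∑ u ∈ G.neighborFinset v, w v u * (M - ‖p u‖) :=
          Finset.sum_nonneg fun u hu =>
            mul_nonneg (hw v u ((G.mem_neighborFinset _ _).mp hu)).le
              (by linarith [hMle u])
        linarith
      intro u hu
      have := (Finset.sum_eq_zero_iff_of_nonneg
        (fun u hu => mul_nonneg (hw v u ((G.mem_neighborFinset _ _).mp hu)).le
          (by linarith [hMle u]))).mp hsum0 u hu
      have hwpos := hw v u ((G.mem_neighborFinset _ _).mp hu)
      have : M - ‖p u‖ = 0 := by
        rcases mul_eq_zero.mp this with h | h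
        · exact absurd h (ne_of_gt hwpos)
        · exact h
      linarith
    -- boundary vertices don't attain the max
    have hBne : ∀ x ∈ B, ‖p x‖ ≠ M := by
      intro x hx h
      rw [h0 x hx] at h
      simp at h
      exact absurd h.symm (ne_of_gt hMpos)
    -- walk induction to reach the boundary
    have hwalk : ∀ (x y : V) (W : G.Walk x y), y ∈ B → ‖p x‖ ≠ M := by
      intro x y W
      induction W with
      | nil => exact fun hy => hBne _ hy
      | cons h W ih =>
        rename_i a b c'
        intro hc hx
        by_cases haB : a ∈ B
        · exact hBne a haB hx
        · exact ih hc (hkey a haB hx b ((G.mem_neighborFinset a b).mpr h))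
    obtain ⟨v₀, _, hv₀⟩ := Finset.exists_mem_eq_sup' (Finset.univ_nonempty (α := V))
      (fun v => ‖p v‖)
    obtain ⟨W⟩ := hG.preconnected v₀ b₀
    exact hwalk v₀ b₀ W hb₀ hv₀.symm
  -- surjectivity by finite dimension
  have hsurj : Function.Surjective L :=
    LinearMap.injective_iff_surjective.mp hinj
  obtain ⟨p, hp⟩ := hsurj c
  refine ⟨p, ?_, fun r hr => hinj (by rw [hp]; exact (hchar r).mpr (by simpa [hd] using hr))⟩
  simpa [hd] using (hchar p).mp hp
end
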